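/- For all ρ00, ρ11 ≥ 0 with ρ00 + ρ11 = 1, all p ∈ (0,1), all integers n ≥ 1, and all c with 0 ≤ c ≤ √(ρ00·ρ11), the temporal-mode randomness satisfies R_temp(c) ≥ ρ11·((1−(1−p)ⁿ)/p)·(−p·log₂ p − (1−p)·log₂(1−p)). -/

import Mathlib

/-- The temporal-mode (arrival-time) randomness function `R_temp(c)`
from Eq. (27) of the paper, for `n` time bins with per-bin decay
probability `p`, with entropies in bits (`Real.logb 2`, which satisfies
the convention `0 · log₂ 0 = 0` since `Real.logb 2 0 = 0`). -/
noncomputable def RandTemp (ρ00 ρ11 p : ℝ) (n : ℕ) (c : ℝ) : ℝ :=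
  let η := (1 - p) ^ n
  let Δ := Real.sqrt ((ρ11 - ρ00) ^ 2 + 4 * c ^ 2)
  let S := -(((1 + Δ) / 2) * Real.logb 2 ((1 + Δ) / 2))
           - ((1 - Δ) / 2) * Real.logb 2 ((1 - Δ) / 2)
  let F := ρ00 + η * ρ11
  let Δ' := Real.sqrt ((ρ00 - η * ρ11) ^ 2 + 4 * η * c ^ 2)
  let μ1 := (F + Δ') / 2
  let μ2 := (F - Δ') / 2;
  -S - (∑ k ∈ Finset.Icc 1 n,
          (1 - p) ^ (k - 1) * p * ρ11 * Real.logb 2 ((1 - p) ^ (k - 1) * p * ρ11))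
    - μ1 * Real.logb 2 μ1 - μ2 * Real.logb 2 μ2

open Real

/-! ### Auxiliary lemmas for the logarithmic-mean monotonicity -/

lemma log_ub {u v : ℝ} (hu : 0 < u) (huv : u ≤ v) :
    u * (Real.log v - Real.log u) ≤ v - u := by
  have hv : 0 < v := lt_of_lt_of_le hu huv
  have h := Real.log_le_sub_one_of_pos (show 0 < v/u by positivity)
  rw [Real.log_div (ne_of_gt hv) (ne_of_gt hu)] at h
  have := mul_le_mul_of_nonneg_left h (le_of_lt hu)
  calc u * (Real.log v - Real.log u) ≤ u * (v/u - 1) := this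
    _ = v - u := by field_simp

lemma log_lb {u v : ℝ} (hu : 0 < u) (huv : u ≤ v) :
    v - u ≤ v * (Real.log v - Real.log u) := by
  have hv : 0 < v := lt_of_lt_of_le hu huv
  have h := Real.log_le_sub_one_of_pos (show 0 < u/v by positivity)
  rw [Real.log_div (ne_of_gt hu) (ne_of_gt hv)] at h
  have h2 : v * (Real.log u - Real.log v) ≤ v * (u/v - 1) :=
    mul_le_mul_of_nonneg_left h (le_of_lt hv)
  have h3 : v * (u/v - 1) = u - v := by field_simp
  nlinarith

lemma stepA {x x' y' : ℝ} (hy' : 0 < y') (h1 : y' < x') (h2 : x' ≤ x) :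
    (x' - y') * (Real.log x - Real.log y') ≤ (x - y') * (Real.log x' - Real.log y') := by
  have hx' : 0 < x' := lt_trans hy' h1
  have f1 := log_lb hy' (le_of_lt h1)
  have f2 := log_ub hx' h2
  nlinarith [sub_nonneg.2 h2, sub_pos.2 h1, mul_le_mul_of_nonneg_left f2 (le_of_lt (sub_pos.2 h1)),
    mul_le_mul_of_nonneg_left f1 (sub_nonneg.2 h2)]

lemma stepB {x y y' : ℝ} (hy' : 0 < y') (h1 : y' ≤ y) (h2 : y < x) :
    (x - y') * (Real.log x - Real.log y) ≤ (x - y) * (Real.log x - Real.log y') := by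
  have hy : 0 < y := lt_of_lt_of_le hy' h1
  have f1 := log_lb hy' h1
  have f2 := log_ub hy (le_of_lt h2)
  nlinarith [sub_pos.2 h2, sub_nonneg.2 h1, mul_le_mul_of_nonneg_left f2 (sub_nonneg.2 h1),
    mul_le_mul_of_nonneg_left f1 (le_of_lt (sub_pos.2 h2))]

lemma logMeanMono {x y x' y' : ℝ} (hy' : 0 < y') (hx' : y' < x') (hy : y' ≤ y)
    (hx : x' ≤ x) (hxy : y < x) :
    (x' - y') * (Real.log x - Real.log y) ≤ (x - y) * (Real.log x' - Real.log y') := by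
  have hy0 : 0 < y := lt_of_lt_of_le hy' hy
  have hx0 : 0 < x := lt_trans hy0 hxy
  have hP : 0 < Real.log x - Real.log y' := by
    have := Real.log_lt_log hy' (lt_of_le_of_lt hy hxy); linarith
  have hQ : 0 < Real.log x' - Real.log y' := by
    have := Real.log_lt_log hy' hx'; linarith
  have hR : 0 < Real.log x - Real.log y := by
    have := Real.log_lt_log hy0 hxy; linarith
  have hA := stepA hy' hx' hx
  have hB := stepB hy' hy hxy
  have h1 : (x' - y') * (Real.log x - Real.log y') * (Real.log x - Real.log y)
      ≤ (x - y') * (Real.log x' - Real.log y') * (Real.log x - Real.log y) :=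
    mul_le_mul_of_nonneg_right hA (le_of_lt hR)
  have h2 : (x - y') * (Real.log x - Real.log y) * (Real.log x' - Real.log y')
      ≤ (x - y) * (Real.log x - Real.log y') * (Real.log x' - Real.log y') :=
    mul_le_mul_of_nonneg_right hB (le_of_lt hQ)
  have key : (x' - y') * (Real.log x - Real.log y) * (Real.log x - Real.log y')
      ≤ (x - y) * (Real.log x' - Real.log y') * (Real.log x - Real.log y') := by nlinarith
  exact le_of_mul_le_mul_right (by linarith [key]) hP

/-! ### Derivative computations -/

lemma hasDerivAt_term (s r q σ m : ℝ) (hq : 0 < q - r*m)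
    (hL : (s + σ * Real.sqrt (q - r*m))/2 ≠ 0) :
    HasDerivAt (fun x => (s + σ * Real.sqrt (q - r*x))/2 * Real.log ((s + σ * Real.sqrt (q - r*x))/2))
      ((Real.log ((s + σ * Real.sqrt (q - r*m))/2) + 1) * (σ * (1/(2*Real.sqrt (q - r*m)) * (-r)) / 2)) m := by
  have h0 : HasDerivAt (fun x : ℝ => q - r*x) (-r) m := by
    simpa using ((hasDerivAt_id m).const_mul r).const_sub q
  have h1 : HasDerivAt (fun x => Real.sqrt (q - r*x)) (1/(2*Real.sqrt (q-r*m)) * (-r)) m :=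
    (Real.hasDerivAt_sqrt (ne_of_gt hq)).comp m h0
  have h2 : HasDerivAt (fun x => (s + σ * Real.sqrt (q - r*x))/2)
      (σ * (1/(2*Real.sqrt (q-r*m)) * (-r)) / 2) m :=
    ((h1.const_mul σ).const_add s).div_const 2
  have h3 : HasDerivAt (fun t : ℝ => t * Real.log t)
      (Real.log ((s + σ * Real.sqrt (q - r*m))/2) + 1) ((s + σ * Real.sqrt (q - r*m))/2) := by
    have := (hasDerivAt_id ((s + σ * Real.sqrt (q - r*m))/2)).fun_mul (Real.hasDerivAt_log hL)
    refine this.congr_deriv ?_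
    have hX : s + σ * Real.sqrt (q - r*m) ≠ 0 := fun h => hL (by rw [h]; norm_num)
    simp only [id, one_mul, mul_inv_cancel₀ hL]
  exact h3.comp m h2

lemma hasDerivAt_term_add (s r q m : ℝ) (hq : 0 < q - r*m)
    (hL : (s + Real.sqrt (q - r*m))/2 ≠ 0) :
    HasDerivAt (fun x => (s + Real.sqrt (q - r*x))/2 * Real.log ((s + Real.sqrt (q - r*x))/2))
      ((Real.log ((s + Real.sqrt (q - r*m))/2) + 1) * (-(r/(2*Real.sqrt (q - r*m)))/2)) m := by
  have h := hasDerivAt_term s r q 1 m hq (by simpa using hL)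
  have hfe : (fun x => (s + 1 * Real.sqrt (q - r*x))/2 * Real.log ((s + 1 * Real.sqrt (q - r*x))/2))
      = (fun x => (s + Real.sqrt (q - r*x))/2 * Real.log ((s + Real.sqrt (q - r*x))/2)) := by
    funext x; rw [one_mul]
  rw [hfe] at h
  convert h using 2
  · rw [one_mul]
  · ring

lemma hasDerivAt_term_sub (s r q m : ℝ) (hq : 0 < q - r*m)
    (hL : (s - Real.sqrt (q - r*m))/2 ≠ 0) :
    HasDerivAt (fun x => (s - Real.sqrt (q - r*x))/2 * Real.log ((s - Real.sqrt (q - r*x))/2))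
      ((Real.log ((s - Real.sqrt (q - r*m))/2) + 1) * ((r/(2*Real.sqrt (q - r*m)))/2)) m := by
  have h := hasDerivAt_term s r q (-1) m hq (by
    have : (s + (-1) * Real.sqrt (q - r*m))/2 = (s - Real.sqrt (q - r*m))/2 := by ring
    rw [this]; exact hL)
  have hfe : (fun x => (s + (-1) * Real.sqrt (q - r*x))/2 * Real.log ((s + (-1) * Real.sqrt (q - r*x))/2))
      = (fun x => (s - Real.sqrt (q - r*x))/2 * Real.log ((s - Real.sqrt (q - r*x))/2)) := by
    funext x
    have : (s + (-1) * Real.sqrt (q - r*x))/2 = (s - Real.sqrt (q - r*x))/2 := by ring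
    rw [this]
  rw [hfe] at h
  convert h using 2
  · have : (s + (-1) * Real.sqrt (q - r*m))/2 = (s - Real.sqrt (q - r*m))/2 := by ring
    rw [this]
  · ring

lemma continuous_term_add (s r q : ℝ) :
    Continuous (fun m => (s + Real.sqrt (q - r*m))/2 * Real.log ((s + Real.sqrt (q - r*m))/2)) := by
  have h : Continuous (fun m : ℝ => (s + Real.sqrt (q - r*m))/2) := by fun_prop
  exact Real.continuous_mul_log.comp h

lemma continuous_term_sub (s r q : ℝ) :
    Continuous (fun m => (s - Real.sqrt (q - r*m))/2 * Real.log ((s - Real.sqrt (q - r*m))/2)) := by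
  have h : Continuous (fun m : ℝ => (s - Real.sqrt (q - r*m))/2) := by fun_prop
  exact Real.continuous_mul_log.comp h

/-! ### The comparison function `W` -/

noncomputable def Wfn (F t m : ℝ) : ℝ :=
  (1 + Real.sqrt (1 - 4*m))/2 * Real.log ((1 + Real.sqrt (1 - 4*m))/2)
  + (1 - Real.sqrt (1 - 4*m))/2 * Real.log ((1 - Real.sqrt (1 - 4*m))/2)
  - (F + Real.sqrt (F^2 - 4*t*m))/2 * Real.log ((F + Real.sqrt (F^2 - 4*t*m))/2)
  - (F - Real.sqrt (F^2 - 4*t*m))/2 * Real.log ((F - Real.sqrt (F^2 - 4*t*m))/2)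

lemma Wfn_continuous (F t : ℝ) : Continuous (Wfn F t) := by
  unfold Wfn
  exact (((continuous_term_add 1 4 1).add (continuous_term_sub 1 4 1)).sub
    (continuous_term_add F (4*t) (F^2))).sub (continuous_term_sub F (4*t) (F^2))
set_option maxHeartbeats 1000000 in
lemma Wfn_deriv_le (a b η x : ℝ) (ha : 0 < a) (hb : 0 < b) (hab : a + b = 1)
    (hη0 : 0 < η) (hη1 : η < 1) (hx0 : 0 < x) (hx1 : x < a*b) :
    ∃ D, HasDerivAt (Wfn (a+η*b) η) D x ∧ D ≤ 0 := by
  have hb' : b = 1 - a := by linarith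
  subst hb'
  have ha1 : a < 1 := by linarith
  have h1 : 0 < 1 - 4*x := by nlinarith [sq_nonneg (2*a-1)]
  have hd0 : 0 < Real.sqrt (1-4*x) := Real.sqrt_pos.2 h1
  have hd2 : (Real.sqrt (1-4*x))^2 = 1-4*x := Real.sq_sqrt h1.le
  set d := Real.sqrt (1-4*x) with hdd
  have hdlt : d < 1 := by nlinarith
  have hF0 : 0 < a + η*(1-a) := by nlinarith
  have h2 : 0 < (a + η*(1-a))^2 - 4*η*x := by
    nlinarith [sq_nonneg (a - η*(1-a)), mul_pos hη0 (sub_pos.2 hx1)]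
  have he0 : 0 < Real.sqrt ((a + η*(1-a))^2-4*η*x) := Real.sqrt_pos.2 h2
  have he2 : (Real.sqrt ((a + η*(1-a))^2-4*η*x))^2 = (a + η*(1-a))^2-4*η*x := Real.sq_sqrt h2.le
  set e := Real.sqrt ((a + η*(1-a))^2-4*η*x) with hee
  have helt : e < a + η*(1-a) := by nlinarith [mul_pos hη0 hx0]
  have had2 : (a*d)^2 = a^2*(1-4*x) := by rw [mul_pow, hd2]
  have habs : (a-2*x)^2 ≤ (a*d)^2 := by nlinarith [mul_pos hx0 (sub_pos.2 hx1)]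
  have hkey1 : a - 2*x ≤ a*d := by
    calc a - 2*x ≤ |a-2*x| := le_abs_self _
      _ = Real.sqrt ((a-2*x)^2) := (Real.sqrt_sq_eq_abs _).symm
      _ ≤ Real.sqrt ((a*d)^2) := Real.sqrt_le_sqrt habs
      _ = a*d := by rw [Real.sqrt_sq_eq_abs]; exact abs_of_nonneg (by positivity)
  have hkey2 : 2*x - a ≤ a*d := by
    calc 2*x - a ≤ |a-2*x| := by rw [abs_sub_comm]; exact le_abs_self _
      _ = Real.sqrt ((a-2*x)^2) := (Real.sqrt_sq_eq_abs _).symm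
      _ ≤ Real.sqrt ((a*d)^2) := Real.sqrt_le_sqrt habs
      _ = a*d := by rw [Real.sqrt_sq_eq_abs]; exact abs_of_nonneg (by positivity)
  have hM2 : η*((1-d)/2) ≤ ((a + η*(1-a))-e)/2 := by
    have hr : 0 ≤ a*(1-η) + η*d := by nlinarith
    have hid : (a*(1-η)+η*d)^2 - ((a + η*(1-a))^2 - 4*η*x) = 2*η*(1-η)*(a*d - (a - 2*x)) := by
      linear_combination (η^2) * hd2
    have hsq : e^2 ≤ (a*(1-η)+η*d)^2 := by
      linarith [hid, he2, mul_nonneg (mul_nonneg hη0.le (sub_pos.2 hη1).le) (sub_nonneg.2 hkey1)]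
    have hle : e ≤ a*(1-η)+η*d := by
      calc e = Real.sqrt (e^2) := (Real.sqrt_sq he0.le).symm
        _ ≤ Real.sqrt ((a*(1-η)+η*d)^2) := Real.sqrt_le_sqrt hsq
        _ = _ := Real.sqrt_sq hr
    linarith [hle]
  have hM1 : η*((1+d)/2) ≤ ((a + η*(1-a))+e)/2 := by
    rcases le_or_gt (η*d - a*(1-η)) 0 with h|h
    · linarith [he0.le, h]
    · have hid2 : ((a + η*(1-a))^2 - 4*η*x) - (η*d - a*(1-η))^2 = 2*η*(1-η)*(a*d - (2*x - a)) := by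
        linear_combination (-(η^2)) * hd2
      have hsq : (η*d - a*(1-η))^2 ≤ e^2 := by
        linarith [hid2, he2, mul_nonneg (mul_nonneg hη0.le (sub_pos.2 hη1).le) (sub_nonneg.2 hkey2)]
      have hle : η*d - a*(1-η) ≤ e := by
        calc η*d - a*(1-η) = Real.sqrt ((η*d - a*(1-η))^2) := (Real.sqrt_sq h.le).symm
          _ ≤ Real.sqrt (e^2) := Real.sqrt_le_sqrt hsq
          _ = e := Real.sqrt_sq he0.le
      linarith [hle]
  have hΛ1 : (0:ℝ) < (1 + d)/2 := by linarith
  have hΛ2 : (0:ℝ) < (1 - d)/2 := by linarith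
  have hM1p : (0:ℝ) < ((a + η*(1-a)) + e)/2 := by linarith
  have hM2p : (0:ℝ) < ((a + η*(1-a)) - e)/2 := by linarith
  refine ⟨(Real.log ((1 + d)/2) + 1) * (-(4/(2*d))/2)
        + (Real.log ((1 - d)/2) + 1) * ((4/(2*d))/2)
        - (Real.log (((a + η*(1-a)) + e)/2) + 1) * (-((4*η)/(2*e))/2)
        - (Real.log (((a + η*(1-a)) - e)/2) + 1) * (((4*η)/(2*e))/2), ?_, ?_⟩
  · have t1 := hasDerivAt_term_add 1 4 1 x h1 (ne_of_gt hΛ1)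
    have t2 := hasDerivAt_term_sub 1 4 1 x h1 (ne_of_gt hΛ2)
    have t3 := hasDerivAt_term_add (a + η*(1-a)) (4*η) ((a + η*(1-a))^2) x h2 (ne_of_gt hM1p)
    have t4 := hasDerivAt_term_sub (a + η*(1-a)) (4*η) ((a + η*(1-a))^2) x h2 (ne_of_gt hM2p)
    exact ((t1.add t2).sub t3).sub t4
  · have key := logMeanMono (x := ((a + η*(1-a))+e)/2) (y := ((a + η*(1-a))-e)/2) (x' := η*((1+d)/2)) (y' := η*((1-d)/2))
      (by positivity) (by nlinarith) hM2 hM1 (by linarith)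
    rw [Real.log_mul (ne_of_gt hη0) (ne_of_gt hΛ1), Real.log_mul (ne_of_gt hη0) (ne_of_gt hΛ2)] at key
    have hdiv : η*(Real.log (((a + η*(1-a))+e)/2) - Real.log (((a + η*(1-a))-e)/2))/e
        ≤ (Real.log ((1+d)/2) - Real.log ((1-d)/2))/d := by
      rw [div_le_div_iff₀ he0 hd0]; nlinarith [key]
    have h4d : -(4/(2*d))/2 = -(1/d) := by field_simp; ring
    have h4d' : (4/(2*d))/2 = 1/d := by field_simp; ring
    have h4e : ((4*η)/(2*e))/2 = η/e := by field_simp; ring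
    have h4e' : -((4*η)/(2*e))/2 = -(η/e) := by rw [← h4e]; ring
    rw [h4d, h4d', h4e, h4e']
    have hdne : d ≠ 0 := ne_of_gt hd0
    have hene : e ≠ 0 := ne_of_gt he0
    have expand : (Real.log ((1 + d)/2) + 1) * (-(1/d))
        + (Real.log ((1 - d)/2) + 1) * (1/d)
        - (Real.log (((a + η*(1-a)) + e)/2) + 1) * (-(η/e))
        - (Real.log (((a + η*(1-a)) - e)/2) + 1) * (η/e)
        = -((Real.log ((1+d)/2) - Real.log ((1-d)/2))/d)
          + η*(Real.log (((a + η*(1-a))+e)/2) - Real.log (((a + η*(1-a))-e)/2))/e := by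
      field_simp
      ring
    rw [expand]
    linarith [hdiv]

lemma core_mono (a b η mlo : ℝ) (ha : 0 < a) (hb : 0 < b) (hab : a + b = 1)
    (hη0 : 0 < η) (hη1 : η < 1) (hm0 : 0 ≤ mlo) (hm1 : mlo ≤ a*b) :
    Wfn (a+η*b) η (a*b) ≤ Wfn (a+η*b) η mlo := by
  have hW : AntitoneOn (Wfn (a+η*b) η) (Set.Icc mlo (a*b)) := by
    apply antitoneOn_of_deriv_nonpos (convex_Icc _ _)
    · exact (Wfn_continuous _ _).continuousOn
    · intro x hx
      rw [interior_Icc] at hx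
      obtain ⟨D, hD, _⟩ := Wfn_deriv_le a b η x ha hb hab hη0 hη1 (lt_of_le_of_lt hm0 hx.1) hx.2
      exact hD.differentiableAt.differentiableWithinAt
    · intro x hx
      rw [interior_Icc] at hx
      obtain ⟨D, hD, hD0⟩ := Wfn_deriv_le a b η x ha hb hab hη0 hη1 (lt_of_le_of_lt hm0 hx.1) hx.2
      rw [hD.deriv]; exact hD0
  exact hW (Set.mem_Icc.2 ⟨le_refl _, hm1⟩) (Set.mem_Icc.2 ⟨hm1, le_refl _⟩) hm1

lemma Wfn_endpoint (a b η : ℝ) (ha : 0 ≤ a) (hb : 0 < b) (hab : a + b = 1) (hη0 : 0 < η) :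
    Wfn (a+η*b) η (a*b) = b*(1-η)*Real.log b - b*η*Real.log η := by
  have hb1 : b = 1 - a := by linarith
  subst hb1
  unfold Wfn
  have e1 : 1 - 4*(a*(1-a)) = (2*a-1)^2 := by ring
  have e2 : (a+η*(1-a))^2 - 4*η*(a*(1-a)) = (a - η*(1-a))^2 := by ring
  rw [e1, e2, Real.sqrt_sq_eq_abs, Real.sqrt_sq_eq_abs]
  have hηb : η*(1-a) ≠ 0 := by positivity
  rcases abs_cases (2*a-1) with ⟨h1, h2⟩ | ⟨h1, h2⟩ <;>
    rcases abs_cases (a - η*(1-a)) with ⟨g1, g2⟩ | ⟨g1, g2⟩ <;>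
    rw [h1, g1]
  · have r1 : (1 + (2*a-1))/2 = a := by ring
    have r2 : (1 - (2*a-1))/2 = 1-a := by ring
    have r3 : (a + η*(1-a) + (a - η*(1-a)))/2 = a := by ring
    have r4 : (a + η*(1-a) - (a - η*(1-a)))/2 = η*(1-a) := by ring
    rw [r1, r2, r3, r4, Real.log_mul (ne_of_gt hη0) (by linarith)]
    ring
  · have r1 : (1 + (2*a-1))/2 = a := by ring
    have r2 : (1 - (2*a-1))/2 = 1-a := by ring
    have r3 : (a + η*(1-a) + -(a - η*(1-a)))/2 = η*(1-a) := by ring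
    have r4 : (a + η*(1-a) - -(a - η*(1-a)))/2 = a := by ring
    rw [r1, r2, r3, r4, Real.log_mul (ne_of_gt hη0) (by linarith)]
    ring
  · have r1 : (1 + -(2*a-1))/2 = 1-a := by ring
    have r2 : (1 - -(2*a-1))/2 = a := by ring
    have r3 : (a + η*(1-a) + (a - η*(1-a)))/2 = a := by ring
    have r4 : (a + η*(1-a) - (a - η*(1-a)))/2 = η*(1-a) := by ring
    rw [r1, r2, r3, r4, Real.log_mul (ne_of_gt hη0) (by linarith)]
    ring
  · have r1 : (1 + -(2*a-1))/2 = 1-a := by ring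
    have r2 : (1 - -(2*a-1))/2 = a := by ring
    have r3 : (a + η*(1-a) + -(a - η*(1-a)))/2 = η*(1-a) := by ring
    have r4 : (a + η*(1-a) - -(a - η*(1-a)))/2 = a := by ring
    rw [r1, r2, r3, r4, Real.log_mul (ne_of_gt hη0) (by linarith)]
    ring

lemma core_ln (a b η c : ℝ) (ha : 0 ≤ a) (hb : 0 < b) (hab : a + b = 1)
    (hη0 : 0 < η) (hη1 : η < 1) (hc2 : c^2 ≤ a*b) :
    b*(1-η)*Real.log b - b*η*Real.log η
      ≤ (1 + Real.sqrt ((b-a)^2 + 4*c^2))/2 * Real.log ((1 + Real.sqrt ((b-a)^2+4*c^2))/2)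
      + (1 - Real.sqrt ((b-a)^2+4*c^2))/2 * Real.log ((1 - Real.sqrt ((b-a)^2+4*c^2))/2)
      - (a+η*b + Real.sqrt ((a-η*b)^2 + 4*η*c^2))/2 * Real.log ((a+η*b + Real.sqrt ((a-η*b)^2+4*η*c^2))/2)
      - (a+η*b - Real.sqrt ((a-η*b)^2+4*η*c^2))/2 * Real.log ((a+η*b - Real.sqrt ((a-η*b)^2+4*η*c^2))/2) := by
  have e1 : (b-a)^2 + 4*c^2 = 1 - 4*(a*b - c^2) := by linear_combination (a+b+1)*hab
  have e2 : (a-η*b)^2 + 4*η*c^2 = (a+η*b)^2 - 4*η*(a*b - c^2) := by ring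
  rw [e1, e2, ← Wfn_endpoint a b η ha hb hab hη0]
  show Wfn (a+η*b) η (a*b) ≤ Wfn (a+η*b) η (a*b - c^2)
  rcases eq_or_lt_of_le ha with h|h
  · have hz : a*b - c^2 = a*b := by nlinarith [sq_nonneg c]
    rw [hz]
  · exact core_mono a b η (a*b - c^2) h hb hab hη0 hη1 (by linarith) (by nlinarith [sq_nonneg c])

lemma sum_lin (p A B : ℝ) (n : ℕ) :
    (∑ k ∈ Finset.Icc 1 n, (1-p)^(k-1) * (((k-1:ℕ):ℝ)*A + B)) * p^2
      = ((1-p)*(1 - (1-p)^n) - n*p*(1-p)^n)*A + (1 - (1-p)^n)*p*B := by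
  induction n with
  | zero => simp
  | succ m ih =>
    rw [Finset.sum_Icc_succ_top (by omega : 1 ≤ m + 1)]
    simp only [Nat.add_sub_cancel]
    push_cast
    ring_nf
    ring_nf at ih
    linear_combination ih



set_option maxHeartbeats 1000000 in
/-- lower bound Eq. (29) on the temporal-mode randomness:
`R_temp(c) ≥ ρ11 · (1−(1−p)ⁿ)/p · ( −p log₂ p − (1−p) log₂(1−p) )`. -/
theorem randTemp_lowerBound (ρ00 ρ11 p : ℝ) (n : ℕ) (c : ℝ)
    (h00 : 0 ≤ ρ00) (h11 : 0 ≤ ρ11) (hsum : ρ00 + ρ11 = 1)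
    (hp0 : 0 < p) (hp1 : p < 1) (hn : 1 ≤ n)
    (hc0 : 0 ≤ c) (hc : c ≤ Real.sqrt (ρ00 * ρ11)) :
    ρ11 * ((1 - (1 - p) ^ n) / p) *
        (-p * Real.logb 2 p - (1 - p) * Real.logb 2 (1 - p))
      ≤ RandTemp ρ00 ρ11 p n c := by
  rcases eq_or_lt_of_le h11 with hb0|hb0
  · -- ρ11 = 0
    have h := hb0.symm
    subst h
    have hr : ρ00 = 1 := by linarith
    have hc' : c = 0 := le_antisymm (by simpa using hc) hc0
    subst hr hc'
    simp [RandTemp]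
  · -- main case
    have hx0 : (0:ℝ) < 1 - p := by linarith
    have hxne : (1:ℝ) - p ≠ 0 := ne_of_gt hx0
    have hpne : p ≠ 0 := ne_of_gt hp0
    have hbne : ρ11 ≠ 0 := ne_of_gt hb0
    have hη0 : 0 < (1-p)^n := pow_pos hx0 n
    have hη1 : (1-p)^n < 1 := pow_lt_one₀ (by linarith) (by linarith) (by omega)
    have hc2 : c^2 ≤ ρ00*ρ11 := by
      nlinarith [Real.sq_sqrt (mul_nonneg h00 h11), Real.sqrt_nonneg (ρ00*ρ11)]
    have key := core_ln ρ00 ρ11 ((1-p)^n) c h00 hb0 hsum hη0 hη1 hc2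
    have hlog2 : (0:ℝ) < Real.log 2 := Real.log_pos (by norm_num)
    -- logb version of the core inequality
    have keyb : ρ11*(1-(1-p)^n)*Real.logb 2 ρ11 - ρ11*(1-p)^n*Real.logb 2 ((1-p)^n)
        ≤ (1 + Real.sqrt ((ρ11-ρ00)^2 + 4*c^2))/2 * Real.logb 2 ((1 + Real.sqrt ((ρ11-ρ00)^2+4*c^2))/2)
        + (1 - Real.sqrt ((ρ11-ρ00)^2+4*c^2))/2 * Real.logb 2 ((1 - Real.sqrt ((ρ11-ρ00)^2+4*c^2))/2)
        - (ρ00+(1-p)^n*ρ11 + Real.sqrt ((ρ00-(1-p)^n*ρ11)^2 + 4*(1-p)^n*c^2))/2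
            * Real.logb 2 ((ρ00+(1-p)^n*ρ11 + Real.sqrt ((ρ00-(1-p)^n*ρ11)^2+4*(1-p)^n*c^2))/2)
        - (ρ00+(1-p)^n*ρ11 - Real.sqrt ((ρ00-(1-p)^n*ρ11)^2+4*(1-p)^n*c^2))/2
            * Real.logb 2 ((ρ00+(1-p)^n*ρ11 - Real.sqrt ((ρ00-(1-p)^n*ρ11)^2+4*(1-p)^n*c^2))/2) := by
      have hconv := mul_le_mul_of_nonneg_right key (inv_nonneg.2 hlog2.le)
      simp only [Real.logb]
      ring_nf
      ring_nf at hconv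
      linarith [hconv]
    -- sum evaluation
    have hterm : ∀ k ∈ Finset.Icc 1 n, (1 - p) ^ (k - 1) * p * ρ11 * Real.logb 2 ((1 - p) ^ (k - 1) * p * ρ11)
        = (1-p)^(k-1) * (((k-1:ℕ):ℝ) * Real.logb 2 (1-p) + (Real.logb 2 p + Real.logb 2 ρ11)) * (p*ρ11) := by
      intro k hk
      rw [Real.logb_mul (mul_ne_zero (pow_ne_zero _ hxne) hpne) hbne,
          Real.logb_mul (pow_ne_zero _ hxne) hpne, Real.logb_pow]
      ring
    have hS0 : (∑ k ∈ Finset.Icc 1 n, (1 - p) ^ (k - 1) * p * ρ11 * Real.logb 2 ((1 - p) ^ (k - 1) * p * ρ11))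
        = (∑ k ∈ Finset.Icc 1 n, (1-p)^(k-1) * (((k-1:ℕ):ℝ) * Real.logb 2 (1-p) + (Real.logb 2 p + Real.logb 2 ρ11))) * (p*ρ11) := by
      rw [Finset.sum_mul]
      exact Finset.sum_congr rfl hterm
    have hgeom := sum_lin p (Real.logb 2 (1-p)) (Real.logb 2 p + Real.logb 2 ρ11) n
    have hgeom2 : ρ11 * ((∑ k ∈ Finset.Icc 1 n, (1-p)^(k-1) * (((k-1:ℕ):ℝ) * Real.logb 2 (1-p) + (Real.logb 2 p + Real.logb 2 ρ11))) * p^2)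
        = ρ11 * (((1-p)*(1 - (1-p)^n) - n*p*(1-p)^n)*Real.logb 2 (1-p) + (1 - (1-p)^n)*p*(Real.logb 2 p + Real.logb 2 ρ11)) := by
      rw [hgeom]
    have hLη : p * ρ11 * (1-p)^n * Real.logb 2 ((1-p)^n) = p * ρ11 * (1-p)^n * ((n:ℝ) * Real.logb 2 (1-p)) := by
      rw [Real.logb_pow]
    have keyb2 := mul_nonneg hp0.le (sub_nonneg.2 keyb)
    have E0 : p * (ρ11 * ((1 - (1 - p) ^ n) / p) * (-p * Real.logb 2 p - (1 - p) * Real.logb 2 (1 - p)))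
        = ρ11 * (1 - (1 - p) ^ n) * (-p * Real.logb 2 p - (1 - p) * Real.logb 2 (1 - p)) := by
      field_simp
    simp only [RandTemp]
    rw [hS0]
    refine le_of_mul_le_mul_left ?_ hp0
    nlinarith [keyb2, hgeom2, hLη, E0]
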